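/- arXiv:1001.3800 — 2 statements merged into one kernel-verified Lean document; each statement's English description precedes it below -/
import Mathlib

section
/- Write a = λ₁² + λ₂² − λ₃² − λ₄². The scalar curvatures are τ = −8a − 4(μ₁² − μ₂²) and τᴰ = −8a − 16(μ₁² − μ₂²). -/
noncomputable section

/-- The underlying 5-dimensional real vector space. -/
abbrev V : Type := Fin 5 → ℝ

/-- The basis `E₁,…,E₅` (0-indexed: `E 0 = E₁`, …, `E 4 = E₅`). -/
def E (i : Fin 5) : V := Pi.single i 1

/-- `ξ = E₅`. -/
def xiV : V := E 4

/-- The almost contact endomorphism `φ`. -/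
def phiV (x : V) : V := ![-x 2, -x 3, x 0, x 1, 0]

/-- The contact form `η`. -/
def etaF (x : V) : ℝ := x 4

/-- The B-metric `g`. -/
def gB (x y : V) : ℝ := x 0 * y 0 + x 1 * y 1 - x 2 * y 2 - x 3 * y 3 + x 4 * y 4

/-- The signs `εᵢ = g(Eᵢ,Eᵢ)`. -/
def eps : Fin 5 → ℝ := ![1, 1, -1, -1, 1]

/-- The Lie bracket: the unique skew-symmetric bilinear bracket whose only nonzero
basis brackets are `[E₁,E₂] = -[E₃,E₄] = -λ₁E₁ - λ₂E₂ + λ₃E₃ + λ₄E₄ + 2μ₁E₅` and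
`[E₁,E₄] = -[E₂,E₃] = -λ₃E₁ - λ₄E₂ - λ₁E₃ - λ₂E₄ + 2μ₂E₅`. -/
def brkt (l1 l2 l3 l4 m1 m2 : ℝ) (x y : V) : V :=
  (x 0 * y 1 - x 1 * y 0 - x 2 * y 3 + x 3 * y 2) •
    (![-l1, -l2, l3, l4, 2 * m1] : V) +
  (x 0 * y 3 - x 3 * y 0 - x 1 * y 2 + x 2 * y 1) •
    (![-l3, -l4, -l1, -l2, 2 * m2] : V)

/-- The torsion `T(x,y) = 2(η(x)∇_yξ − η(y)∇_xξ + g(∇_xξ,y)ξ)`. -/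
def Tors (nabla : V → V → V) (x y : V) : V :=
  (2 : ℝ) • (etaF x • nabla y xiV - etaF y • nabla x xiV + gB (nabla x xiV) y • xiV)

/-- The φKT-connection `D_x y = ∇_x y + (1/2)T(x,y)`. -/
def Dconn (nabla : V → V → V) (x y : V) : V :=
  nabla x y + (1 / 2 : ℝ) • Tors nabla x y

/-- Curvature of a connection: `∇_x∇_y z − ∇_y∇_x z − ∇_{[x,y]}z`. -/
def curv (br conn : V → V → V) (x y z : V) : V :=
  conn x (conn y z) - conn y (conn x z) - conn (br x y) z

/-- Curvature (0,4)-tensor. -/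
def curv4 (br conn : V → V → V) (x y z w : V) : ℝ := gB (curv br conn x y z) w

/-- Ricci tensor. -/
def ricci (br conn : V → V → V) (y z : V) : ℝ :=
  ∑ i : Fin 5, eps i * curv4 br conn (E i) y z (E i)

/-- Scalar curvature. -/
def scal (br conn : V → V → V) : ℝ :=
  ∑ i : Fin 5, ∑ j : Fin 5, eps i * eps j * curv4 br conn (E i) (E j) (E j) (E i)

/-- `(∇_xφ)y = ∇_x(φy) − φ(∇_x y)`. -/
def nphi (nabla : V → V → V) (x y : V) : V := nabla x (phiV y) - phiV (nabla x y)

/-- The square norm `‖∇φ‖²`. -/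
def sqnormNphi (nabla : V → V → V) : ℝ :=
  ∑ i : Fin 5, ∑ k : Fin 5,
    eps i * eps k * gB (nphi nabla (E i) (E k)) (nphi nabla (E i) (E k))

/-!
The B-metric `g` is nondegenerate (`g(x, Eₖ) = εₖ xₖ` with `εₖ² = 1`), so the Koszul formula
determines `∇` uniquely as `koszulConn`. Once `∇`, and with it `D`, is explicit, both scalar
curvatures are finite sums over the basis of polynomials in the structure constants `λᵢ, μⱼ`.
-/

lemma gB_E (x : V) (k : Fin 5) : gB x (E k) = eps k * x k := by
  fin_cases k <;> simp [gB, E, eps]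

lemma eq_of_forall_gB_E {v w : V} (h : ∀ k, gB v (E k) = gB w (E k)) : v = w := by
  funext k
  have hk := h k
  rw [gB_E, gB_E] at hk
  fin_cases k <;> simp [eps] at hk ⊢ <;> linarith

lemma eps_mul_self (k : Fin 5) : eps k * eps k = 1 := by
  fin_cases k <;> norm_num [eps]

def koszulConn (br : V → V → V) (x y : V) : V := fun k =>
  eps k / 2 * (gB (br x y) (E k) + gB (br (E k) x) y + gB (br (E k) y) x)

theorem eq_koszulConn_of_koszul (br nabla : V → V → V)
    (hkos : ∀ x y z : V, 2 * gB (nabla x y) z = gB (br x y) z + gB (br z x) y + gB (br z y) x) :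
    nabla = koszulConn br := by
  funext x y
  refine eq_of_forall_gB_E fun k => ?_
  have hk := hkos x y (E k)
  rw [gB_E (nabla x y)] at hk
  rw [gB_E, gB_E, koszulConn]
  linear_combination hk / 2 -
    (gB (br x y) (E k) + gB (br (E k) x) y + gB (br (E k) y) x) / 2 * eps_mul_self k

theorem scal_koszulConn_brkt (l1 l2 l3 l4 m1 m2 : ℝ) :
    scal (brkt l1 l2 l3 l4 m1 m2) (koszulConn (brkt l1 l2 l3 l4 m1 m2)) =
      -8 * (l1 ^ 2 + l2 ^ 2 - l3 ^ 2 - l4 ^ 2) - 4 * (m1 ^ 2 - m2 ^ 2) := by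
  simp only [scal, curv4, curv, koszulConn, gB, brkt, E, eps,
    Fin.sum_univ_five, Pi.single_apply, Pi.add_apply, Pi.sub_apply, Pi.smul_apply,
    smul_eq_mul, Matrix.cons_val_zero, Matrix.cons_val_one, Matrix.head_cons,
    Matrix.cons_val_two, Matrix.tail_cons, Matrix.cons_val_three, Matrix.cons_val_four,
    Fin.reduceEq, reduceIte, mul_one, mul_zero, zero_mul, one_mul, add_zero, zero_add,
    sub_zero, zero_sub, neg_zero, mul_neg, neg_neg, neg_mul]
  ring

theorem scal_Dconn_koszulConn_brkt (l1 l2 l3 l4 m1 m2 : ℝ) :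
    scal (brkt l1 l2 l3 l4 m1 m2) (Dconn (koszulConn (brkt l1 l2 l3 l4 m1 m2))) =
      -8 * (l1 ^ 2 + l2 ^ 2 - l3 ^ 2 - l4 ^ 2) - 16 * (m1 ^ 2 - m2 ^ 2) := by
  simp only [scal, curv4, curv, Dconn, Tors, koszulConn, gB, brkt, etaF, xiV, E, eps,
    Fin.sum_univ_five, Pi.single_apply, Pi.add_apply, Pi.sub_apply, Pi.smul_apply,
    smul_eq_mul, Matrix.cons_val_zero, Matrix.cons_val_one, Matrix.head_cons,
    Matrix.cons_val_two, Matrix.tail_cons, Matrix.cons_val_three, Matrix.cons_val_four,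
    Fin.reduceEq, reduceIte, mul_one, mul_zero, zero_mul, one_mul, add_zero, zero_add,
    sub_zero, zero_sub, neg_zero, mul_neg, neg_neg, neg_mul]
  ring

theorem statement_16 (l1 l2 l3 l4 m1 m2 : ℝ)
    (nabla : V → V → V)
    (hkos : ∀ x y z : V, 2 * gB (nabla x y) z =
      gB (brkt l1 l2 l3 l4 m1 m2 x y) z + gB (brkt l1 l2 l3 l4 m1 m2 z x) y +
        gB (brkt l1 l2 l3 l4 m1 m2 z y) x) :
    ∀ a : ℝ, a = l1 ^ 2 + l2 ^ 2 - l3 ^ 2 - l4 ^ 2 →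
      (scal (brkt l1 l2 l3 l4 m1 m2) nabla = -8 * a - 4 * (m1 ^ 2 - m2 ^ 2) ∧
      scal (brkt l1 l2 l3 l4 m1 m2) (Dconn nabla) = -8 * a - 16 * (m1 ^ 2 - m2 ^ 2)) := by
  obtain rfl := eq_koszulConn_of_koszul _ nabla hkos
  rintro a rfl
  exact ⟨scal_koszulConn_brkt .., scal_Dconn_koszulConn_brkt ..⟩
end
end

section
/- The following conditions are equivalent: (i) ‖∇φ‖² = 0 (the manifold is an isotropic-F₀-manifold); (ii) τ = τᴰ (the scalar curvatures for ∇ and D are equal); (iii) the vectors ∇_{Eᵢ}ξ for i = 1,2,3,4 are isotropic, i.e. g(∇_{Eᵢ}ξ, ∇_{Eᵢ}ξ) = 0 for i = 1,2,3,4; (iv) μ₁ = μ₂ or μ₁ = −μ₂. -/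
noncomputable section

/-!
The Koszul formula determines `∇` because `g` is nondegenerate, so `∇` is the explicit
connection `leviCivita` below, whose ξ-derivative `∇_x ξ` depends only on `μ₁, μ₂`.
A direct computation in the basis then gives `g(∇_{Eᵢ}ξ, ∇_{Eᵢ}ξ) = εᵢ(μ₁² − μ₂²)` for `i ≤ 4`,
`‖∇φ‖² = 8(μ₂² − μ₁²)` and `τᴰ − τ = 12(μ₂² − μ₁²)`, so each condition says `μ₁² = μ₂²`.
-/

def IsKoszul (br nabla : V → V → V) : Prop :=
  ∀ x y z : V, 2 * gB (nabla x y) z = gB (br x y) z + gB (br z x) y + gB (br z y) x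

lemma eq_of_forall_gB_eq {u v : V} (h : ∀ z, gB u z = gB v z) : u = v := by
  funext k
  have hk := h (E k)
  fin_cases k <;> simpa [gB, E] using hk

lemma IsKoszul.unique {br nabla nabla' : V → V → V} (h : IsKoszul br nabla)
    (h' : IsKoszul br nabla') : nabla = nabla' := by
  funext x y
  exact eq_of_forall_gB_eq fun z => by linarith [h x y z, h' x y z]

section

variable (l1 l2 l3 l4 m1 m2 : ℝ)

def nablaXi (x : V) : V :=
  ![m1 * x 1 + m2 * x 3, -m1 * x 0 - m2 * x 2, m1 * x 3 - m2 * x 1, m2 * x 0 - m1 * x 2, 0]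

def leviCivita (x y : V) : V :=
  (l1 * x 0 + l2 * x 1 + l3 * x 2 + l4 * x 3) • ![-y 1, y 0, -y 3, y 2, 0] +
  (l3 * x 0 + l4 * x 1 - l1 * x 2 - l2 * x 3) • ![-y 3, y 2, y 1, -y 0, 0] +
  etaF x • nablaXi m1 m2 y + etaF y • nablaXi m1 m2 x +
  (etaF (brkt l1 l2 l3 l4 m1 m2 x y) / 2) • xiV

lemma isKoszul_leviCivita :
    IsKoszul (brkt l1 l2 l3 l4 m1 m2) (leviCivita l1 l2 l3 l4 m1 m2) := by
  intro x y z
  simp [leviCivita, nablaXi, brkt, gB, etaF, xiV, E]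
  ring

lemma leviCivita_xi (x : V) :
    leviCivita l1 l2 l3 l4 m1 m2 x xiV = nablaXi m1 m2 x := by
  funext k
  fin_cases k <;> simp [leviCivita, nablaXi, brkt, etaF, xiV, E]

lemma gB_nablaXi_self (i : Fin 4) :
    gB (nablaXi m1 m2 (E i.castSucc)) (nablaXi m1 m2 (E i.castSucc)) =
      eps i.castSucc * (m1 ^ 2 - m2 ^ 2) := by
  fin_cases i <;> simp [nablaXi, gB, E, eps] <;> ring

lemma sqnormNphi_leviCivita :
    sqnormNphi (leviCivita l1 l2 l3 l4 m1 m2) = 8 * (m2 ^ 2 - m1 ^ 2) := by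
  simp [sqnormNphi, nphi, leviCivita, nablaXi, brkt, phiV, gB, etaF, xiV, E, eps,
    Fin.sum_univ_five, Matrix.vecHead, Matrix.vecTail, Pi.single_apply]
  ring

lemma scal_leviCivita :
    scal (brkt l1 l2 l3 l4 m1 m2) (leviCivita l1 l2 l3 l4 m1 m2) =
      4 * (m2 ^ 2 - m1 ^ 2) + 8 * (l3 ^ 2 + l4 ^ 2 - l1 ^ 2 - l2 ^ 2) := by
  simp [scal, curv4, curv, leviCivita, nablaXi, brkt, gB, etaF, xiV, E, eps,
    Fin.sum_univ_five, Matrix.vecHead, Matrix.vecTail, Pi.single_apply]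
  ring

lemma scal_Dconn_leviCivita :
    scal (brkt l1 l2 l3 l4 m1 m2) (Dconn (leviCivita l1 l2 l3 l4 m1 m2)) =
      16 * (m2 ^ 2 - m1 ^ 2) + 8 * (l3 ^ 2 + l4 ^ 2 - l1 ^ 2 - l2 ^ 2) := by
  simp [scal, curv4, curv, Dconn, Tors, leviCivita, nablaXi, brkt, gB, etaF, xiV,
    E, eps, Fin.sum_univ_five, Matrix.vecHead, Matrix.vecTail, Pi.single_apply]
  ring

end

theorem statement_18 (l1 l2 l3 l4 m1 m2 : ℝ)
    (nabla : V → V → V)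
    (hkos : ∀ x y z : V, 2 * gB (nabla x y) z =
      gB (brkt l1 l2 l3 l4 m1 m2 x y) z + gB (brkt l1 l2 l3 l4 m1 m2 z x) y +
        gB (brkt l1 l2 l3 l4 m1 m2 z y) x) :
    ((sqnormNphi nabla = 0) ↔
      (scal (brkt l1 l2 l3 l4 m1 m2) nabla = scal (brkt l1 l2 l3 l4 m1 m2) (Dconn nabla))) ∧
    ((sqnormNphi nabla = 0) ↔
      (∀ i : Fin 4, gB (nabla (E i.castSucc) xiV) (nabla (E i.castSucc) xiV) = 0)) ∧
    ((sqnormNphi nabla = 0) ↔ (m1 = m2 ∨ m1 = -m2)) := by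
  obtain rfl : nabla = leviCivita l1 l2 l3 l4 m1 m2 :=
    IsKoszul.unique hkos (isKoszul_leviCivita l1 l2 l3 l4 m1 m2)
  simp only [sqnormNphi_leviCivita, scal_leviCivita, scal_Dconn_leviCivita, leviCivita_xi,
    gB_nablaXi_self, ← sq_eq_sq_iff_eq_or_eq_neg]
  refine ⟨by constructor <;> intro h <;> linarith, ⟨fun h i => ?_, fun h => ?_⟩,
    by constructor <;> intro h <;> linarith⟩
  · rw [show m1 ^ 2 - m2 ^ 2 = 0 by linarith, mul_zero]
  · have h0 := h 0
    simp only [Fin.castSucc_zero, eps, Matrix.cons_val_zero, one_mul] at h0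
    linarith
end
end
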